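/- Let ν1, ν2 be real numbers with ν1 > 1 and ν2 > 1. There is a constant C = C(ν1,ν2) > 0, depending only on ν1 and ν2, such that for all measurable functions u, v on (0,∞) with ‖u‖_{ν1} < ∞ and ‖v‖_{ν2} < ∞, the convolution (u∗v)(τ) = ∫₀^τ u(τ-η) v(η) dη exists for almost every τ ∈ (0,∞), is measurable, and satisfies ‖u∗v‖_{ν1+ν2} ≤ C(ν1,ν2) · ‖u‖_{ν1} · ‖v‖_{ν2}. -/

import Mathlib

open Complex MeasureTheory
open scoped ENNReal

/-- The weighted norm `‖u‖_ν = (∫₀^∞ |u(t)|² (2t)^{1-ν} dt)^{1/2}` (possibly infinite). -/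
noncomputable def wnorm (ν : ℝ) (u : ℝ → ℂ) : ℝ≥0∞ :=
  (∫⁻ t in Set.Ioi (0 : ℝ),
      ENNReal.ofReal (‖u t‖ ^ 2 * (2 * t) ^ (1 - ν))) ^ (1 / 2 : ℝ)

/-- The convolution `(u ∗ v)(τ) = ∫₀^τ u(τ-η) v(η) dη` on `(0,∞)`. -/
noncomputable def halfLineConv (u v : ℝ → ℂ) : ℝ → ℂ :=
  fun τ => ∫ η in Set.Ioo (0 : ℝ) τ, u (τ - η) * v η

/-- The integrand of the weighted norm, as an `ℝ≥0∞`-valued kernel. -/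
noncomputable def wker (ν : ℝ) (u : ℝ → ℂ) : ℝ → ℝ≥0∞ :=
  fun t => ENNReal.ofReal (‖u t‖ ^ 2 * (2 * t) ^ (1 - ν))

lemma wnorm_eq (ν : ℝ) (u : ℝ → ℂ) :
    wnorm ν u = (∫⁻ t in Set.Ioi (0 : ℝ), wker ν u t) ^ (1 / 2 : ℝ) := rfl

lemma wker_ne_top (ν : ℝ) (u : ℝ → ℂ) (t : ℝ) : wker ν u t ≠ ⊤ :=
  ENNReal.ofReal_ne_top

lemma measurable_wker {ν : ℝ} {u : ℝ → ℂ} (hu : Measurable u) :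
    Measurable (wker ν u) := by
  have h1 : Measurable fun t : ℝ => ‖u t‖ ^ 2 :=
    ((continuous_norm.measurable.comp hu).pow_const 2)
  have hr : Measurable fun s : ℝ => s ^ (1 - ν) := by measurability
  have h2 : Measurable fun t : ℝ => (2 * t) ^ (1 - ν) := hr.comp (measurable_id.const_mul 2)
  exact (h1.mul h2).ennreal_ofReal

/-- The weighted beta-type integral bound. -/
lemma weight_lintegral_le {ν1 ν2 : ℝ} (hν1 : 1 < ν1) (hν2 : 1 < ν2) {τ : ℝ} (hτ : 0 < τ) :
    ∫⁻ η in Set.Ioo (0 : ℝ) τ,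
        ENNReal.ofReal ((2 * (τ - η)) ^ (ν1 - 1) * (2 * η) ^ (ν2 - 1)) ≤
      ENNReal.ofReal ((2 * τ) ^ (ν1 + ν2 - 1) * (1 / (2 * ν2))) := by
  have hν2' : (0 : ℝ) < ν2 := by linarith
  have h2τ : (0 : ℝ) < 2 * τ := by linarith
  have step1 : ∫⁻ η in Set.Ioo (0 : ℝ) τ,
      ENNReal.ofReal ((2 * (τ - η)) ^ (ν1 - 1) * (2 * η) ^ (ν2 - 1)) ≤
      ∫⁻ η in Set.Ioo (0 : ℝ) τ,
      ENNReal.ofReal ((2 * τ) ^ (ν1 - 1) * (2 * η) ^ (ν2 - 1)) := by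
    refine setLIntegral_mono' measurableSet_Ioo (fun η hη => ?_)
    refine ENNReal.ofReal_le_ofReal (mul_le_mul_of_nonneg_right ?_
      (Real.rpow_nonneg (by linarith [hη.1]) _))
    exact Real.rpow_le_rpow (by linarith [hη.2]) (by linarith [hη.1]) (by linarith)
  refine step1.trans ?_
  have hint : IntegrableOn (fun η : ℝ => η ^ (ν2 - 1)) (Set.Ioo 0 τ) := by
    have h := intervalIntegral.intervalIntegrable_rpow' (a := 0) (b := τ)
      (by linarith : (-1 : ℝ) < ν2 - 1)
    rw [intervalIntegrable_iff_integrableOn_Ioo_of_le hτ.le] at h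
    exact h
  have hval : ∫ η in Set.Ioo (0 : ℝ) τ, η ^ (ν2 - 1) = τ ^ ν2 / ν2 := by
    rw [← MeasureTheory.integral_Ioc_eq_integral_Ioo,
      ← intervalIntegral.integral_of_le hτ.le,
      integral_rpow (Or.inl (by linarith : (-1 : ℝ) < ν2 - 1))]
    rw [show ν2 - 1 + 1 = ν2 by ring, Real.zero_rpow (by linarith : ν2 ≠ 0)]
    ring
  have hlin : ∫⁻ η in Set.Ioo (0 : ℝ) τ, ENNReal.ofReal (η ^ (ν2 - 1)) =
      ENNReal.ofReal (τ ^ ν2 / ν2) := by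
    rw [← ofReal_integral_eq_lintegral_ofReal hint ?_, hval]
    filter_upwards [ae_restrict_mem measurableSet_Ioo] with η hη
    exact Real.rpow_nonneg hη.1.le _
  calc ∫⁻ η in Set.Ioo (0 : ℝ) τ,
        ENNReal.ofReal ((2 * τ) ^ (ν1 - 1) * (2 * η) ^ (ν2 - 1))
      = ∫⁻ η in Set.Ioo (0 : ℝ) τ,
        ENNReal.ofReal ((2 * τ) ^ (ν1 - 1) * 2 ^ (ν2 - 1)) * ENNReal.ofReal (η ^ (ν2 - 1)) := by
        refine setLIntegral_congr_fun measurableSet_Ioo (fun η hη => ?_)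
        rw [← ENNReal.ofReal_mul (by positivity)]
        congr 1
        rw [Real.mul_rpow (by norm_num) hη.1.le]
        ring
    _ = ENNReal.ofReal ((2 * τ) ^ (ν1 - 1) * 2 ^ (ν2 - 1)) *
        ∫⁻ η in Set.Ioo (0 : ℝ) τ, ENNReal.ofReal (η ^ (ν2 - 1)) :=
        lintegral_const_mul' _ _ ENNReal.ofReal_ne_top
    _ = ENNReal.ofReal ((2 * τ) ^ (ν1 - 1) * 2 ^ (ν2 - 1) * (τ ^ ν2 / ν2)) := by
        rw [hlin, ← ENNReal.ofReal_mul (by positivity)]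
    _ ≤ ENNReal.ofReal ((2 * τ) ^ (ν1 + ν2 - 1) * (1 / (2 * ν2))) := by
        refine ENNReal.ofReal_le_ofReal (le_of_eq ?_)
        have h2 : (2 : ℝ) ^ ν2 = 2 ^ (ν2 - 1) * 2 := by
          rw [← Real.rpow_add_one (by norm_num : (2 : ℝ) ≠ 0) (ν2 - 1)]
          norm_num
        have key : (2 * τ) ^ (ν1 + ν2 - 1) = (2 * τ) ^ (ν1 - 1) * (2 ^ (ν2 - 1) * 2 * τ ^ ν2) := by
          rw [show ν1 + ν2 - 1 = (ν1 - 1) + ν2 by ring, Real.rpow_add h2τ]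
          congr 1
          rw [Real.mul_rpow (by norm_num) hτ.le, h2]
        rw [key]
        field_simp
  
/-- Pointwise Cauchy–Schwarz bound for the convolution. -/
lemma cs_bound {ν1 ν2 : ℝ} {u v : ℝ → ℂ} (hu : Measurable u) (hv : Measurable v)
    {τ : ℝ} (hτ : 0 < τ) :
    (∫⁻ η in Set.Ioo (0 : ℝ) τ, ENNReal.ofReal ‖u (τ - η) * v η‖) ^ (2 : ℕ) ≤
      (∫⁻ η in Set.Ioo (0 : ℝ) τ, wker ν1 u (τ - η) * wker ν2 v η) *
      (∫⁻ η in Set.Ioo (0 : ℝ) τ,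
        ENNReal.ofReal ((2 * (τ - η)) ^ (ν1 - 1) * (2 * η) ^ (ν2 - 1))) := by
  set X : ℝ → ℝ≥0∞ := fun η => wker ν1 u (τ - η) * wker ν2 v η with hXdef
  set W : ℝ → ℝ≥0∞ := fun η =>
    ENNReal.ofReal ((2 * (τ - η)) ^ (ν1 - 1) * (2 * η) ^ (ν2 - 1)) with hWdef
  have hXm : Measurable X :=
    ((measurable_wker hu).comp (measurable_const.sub measurable_id)).mul (measurable_wker hv)
  have hWm : Measurable W := by
    have hr1 : Measurable fun s : ℝ => s ^ (ν1 - 1) := by measurability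
    have hr2 : Measurable fun s : ℝ => s ^ (ν2 - 1) := by measurability
    exact ((hr1.comp ((measurable_const.sub measurable_id).const_mul 2)).mul
      (hr2.comp (measurable_id.const_mul 2))).ennreal_ofReal
  have key : ∀ η ∈ Set.Ioo (0 : ℝ) τ,
      ENNReal.ofReal ‖u (τ - η) * v η‖ = (X η) ^ (1/2 : ℝ) * (W η) ^ (1/2 : ℝ) := by
    intro η hη
    have hs : (0 : ℝ) < 2 * (τ - η) := by have := hη.2; linarith
    have hη0 : (0 : ℝ) < 2 * η := by have := hη.1; linarith
    rw [← ENNReal.mul_rpow_of_nonneg _ _ (by norm_num : (0:ℝ) ≤ 1/2)]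
    have hXW : X η * W η = (ENNReal.ofReal ‖u (τ - η) * v η‖) ^ (2 : ℕ) := by
      simp only [hXdef, hWdef, wker]
      rw [← ENNReal.ofReal_mul (by positivity), ← ENNReal.ofReal_mul (by positivity),
        ← ENNReal.ofReal_pow (norm_nonneg _)]
      congr 1
      have e1 : (2 * (τ - η)) ^ (1 - ν1) * (2 * (τ - η)) ^ (ν1 - 1) = 1 := by
        rw [← Real.rpow_add hs, show 1 - ν1 + (ν1 - 1) = 0 by ring, Real.rpow_zero]
      have e2 : (2 * η) ^ (1 - ν2) * (2 * η) ^ (ν2 - 1) = 1 := by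
        rw [← Real.rpow_add hη0, show 1 - ν2 + (ν2 - 1) = 0 by ring, Real.rpow_zero]
      have hnorm : ‖u (τ - η) * v η‖ = ‖u (τ - η)‖ * ‖v η‖ := by
        rw [norm_mul]
      calc ‖u (τ - η)‖ ^ 2 * (2 * (τ - η)) ^ (1 - ν1) *
            (‖v η‖ ^ 2 * (2 * η) ^ (1 - ν2)) *
            ((2 * (τ - η)) ^ (ν1 - 1) * (2 * η) ^ (ν2 - 1))
          = (‖u (τ - η)‖ * ‖v η‖) ^ 2 *
            ((2 * (τ - η)) ^ (1 - ν1) * (2 * (τ - η)) ^ (ν1 - 1)) *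
            ((2 * η) ^ (1 - ν2) * (2 * η) ^ (ν2 - 1)) := by ring
        _ = ‖u (τ - η) * v η‖ ^ 2 := by rw [e1, e2, hnorm]; ring
    rw [hXW, ← ENNReal.rpow_natCast _ 2, ← ENNReal.rpow_mul]
    norm_num
  have hre : ∫⁻ η in Set.Ioo (0 : ℝ) τ, ENNReal.ofReal ‖u (τ - η) * v η‖ =
      ∫⁻ η in Set.Ioo (0 : ℝ) τ, (X η) ^ (1/2 : ℝ) * (W η) ^ (1/2 : ℝ) :=
    setLIntegral_congr_fun measurableSet_Ioo key
  rw [hre]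
  have hpq : Real.HolderConjugate 2 2 := Real.HolderConjugate.two_two
  have hH := ENNReal.lintegral_mul_le_Lp_mul_Lq (volume.restrict (Set.Ioo (0:ℝ) τ)) hpq
    (f := fun η => (X η) ^ (1/2 : ℝ)) (g := fun η => (W η) ^ (1/2 : ℝ))
    (ENNReal.continuous_rpow_const.measurable.comp hXm).aemeasurable
    (ENNReal.continuous_rpow_const.measurable.comp hWm).aemeasurable
  simp only [Pi.mul_apply] at hH
  have hf2 : ∀ η : ℝ, ((X η) ^ (1/2 : ℝ)) ^ (2 : ℝ) = X η := by
    intro η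
    rw [← ENNReal.rpow_mul]
    norm_num
  have hg2 : ∀ η : ℝ, ((W η) ^ (1/2 : ℝ)) ^ (2 : ℝ) = W η := by
    intro η
    rw [← ENNReal.rpow_mul]
    norm_num
  simp only [hf2, hg2] at hH
  calc (∫⁻ η in Set.Ioo (0 : ℝ) τ, (X η) ^ (1/2 : ℝ) * (W η) ^ (1/2 : ℝ)) ^ (2 : ℕ)
      ≤ ((∫⁻ η in Set.Ioo (0 : ℝ) τ, X η) ^ (1/2 : ℝ) *
        (∫⁻ η in Set.Ioo (0 : ℝ) τ, W η) ^ (1/2 : ℝ)) ^ (2 : ℕ) :=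
        pow_le_pow_left₀ (zero_le') hH 2
    _ = (∫⁻ η in Set.Ioo (0 : ℝ) τ, X η) * (∫⁻ η in Set.Ioo (0 : ℝ) τ, W η) := by
        rw [mul_pow, ← ENNReal.rpow_natCast _ 2, ← ENNReal.rpow_natCast _ 2,
          ← ENNReal.rpow_mul, ← ENNReal.rpow_mul]
        norm_num

/-- Rewriting the inner set integral as a full-line integral of indicators. -/
lemma inner_eq (ν1 ν2 : ℝ) (u v : ℝ → ℂ) (τ : ℝ) :
    ∫⁻ η in Set.Ioo (0 : ℝ) τ, wker ν1 u (τ - η) * wker ν2 v η =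
      ∫⁻ η, (Set.Ioi (0:ℝ)).indicator (wker ν1 u) (τ - η) *
        (Set.Ioi (0:ℝ)).indicator (wker ν2 v) η := by
  rw [← lintegral_indicator measurableSet_Ioo]
  congr 1
  funext η
  by_cases h1 : 0 < η <;> by_cases h2 : η < τ <;>
    simp [Set.indicator_apply, Set.mem_Ioo, Set.mem_Ioi, sub_pos, h1, h2]

/-- The Fubini/translation identity. -/
lemma fubini_aux {ν1 ν2 : ℝ} {u v : ℝ → ℂ} (hu : Measurable u) (hv : Measurable v) :
    ∫⁻ τ in Set.Ioi (0:ℝ), ∫⁻ η in Set.Ioo (0 : ℝ) τ, wker ν1 u (τ - η) * wker ν2 v η =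
      (∫⁻ t in Set.Ioi (0:ℝ), wker ν1 u t) * (∫⁻ t in Set.Ioi (0:ℝ), wker ν2 v t) := by
  set Φ := (Set.Ioi (0:ℝ)).indicator (wker ν1 u) with hΦdef
  set Ψ := (Set.Ioi (0:ℝ)).indicator (wker ν2 v) with hΨdef
  have hΦ : Measurable Φ := (measurable_wker hu).indicator measurableSet_Ioi
  have hΨ : Measurable Ψ := (measurable_wker hv).indicator measurableSet_Ioi
  have hΨfin : ∀ η : ℝ, Ψ η ≠ ⊤ := by
    intro η
    rw [hΨdef, Set.indicator_apply]
    split_ifs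
    · exact wker_ne_top _ _ _
    · exact ENNReal.zero_ne_top
  calc ∫⁻ τ in Set.Ioi (0:ℝ), ∫⁻ η in Set.Ioo (0 : ℝ) τ, wker ν1 u (τ - η) * wker ν2 v η
      = ∫⁻ τ in Set.Ioi (0:ℝ), ∫⁻ η, Φ (τ - η) * Ψ η :=
        lintegral_congr fun τ => inner_eq ν1 ν2 u v τ
    _ = ∫⁻ τ, ∫⁻ η, Φ (τ - η) * Ψ η := by
        rw [← lintegral_indicator measurableSet_Ioi]
        congr 1
        funext τ
        rw [Set.indicator_apply]
        split_ifs with h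
        · rfl
        · symm
          have hz : ∀ η : ℝ, Φ (τ - η) * Ψ η = 0 := by
            intro η
            by_cases h1 : 0 < η
            · have hτη : ¬ (0 < τ - η) := by
                simp only [Set.mem_Ioi, not_lt] at h
                intro hc; linarith
              rw [hΦdef, Set.indicator_apply, if_neg (by simpa [Set.mem_Ioi] using hτη)]
              simp
            · rw [hΨdef, Set.indicator_apply, if_neg (by simpa [Set.mem_Ioi] using h1)]
              simp
          simp [hz]
    _ = ∫⁻ η, ∫⁻ τ, Φ (τ - η) * Ψ η := by
        refine lintegral_lintegral_swap ?_
        exact ((hΦ.comp (measurable_fst.sub measurable_snd)).mul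
          (hΨ.comp measurable_snd)).aemeasurable
    _ = ∫⁻ η, (∫⁻ τ, Φ (τ - η)) * Ψ η := by
        refine lintegral_congr fun η => ?_
        exact lintegral_mul_const' _ _ (hΨfin η)
    _ = ∫⁻ η, (∫⁻ τ, Φ τ) * Ψ η := by
        refine lintegral_congr fun η => ?_
        rw [lintegral_sub_right_eq_self Φ η]
    _ = (∫⁻ τ, Φ τ) * ∫⁻ η, Ψ η := lintegral_const_mul'' _ hΨ.aemeasurable
    _ = (∫⁻ t in Set.Ioi (0:ℝ), wker ν1 u t) * (∫⁻ t in Set.Ioi (0:ℝ), wker ν2 v t) := by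
        rw [hΦdef, hΨdef, lintegral_indicator measurableSet_Ioi,
          lintegral_indicator measurableSet_Ioi]

/-- For `ν1, ν2 > 1` there is a constant `C = C(ν1,ν2) > 0` such that for all measurable
`u, v` on `(0,∞)` with `‖u‖_{ν1} < ∞`, `‖v‖_{ν2} < ∞`, the convolution `u ∗ v` exists
a.e. on `(0,∞)`, is measurable, and `‖u ∗ v‖_{ν1+ν2} ≤ C ‖u‖_{ν1} ‖v‖_{ν2}`. -/
theorem halfLineConv_bound (ν1 ν2 : ℝ) (hν1 : 1 < ν1) (hν2 : 1 < ν2) :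
    ∃ C : ℝ, 0 < C ∧
      ∀ u v : ℝ → ℂ, Measurable u → Measurable v →
        wnorm ν1 u < ⊤ → wnorm ν2 v < ⊤ →
          (∀ᵐ τ ∂(volume.restrict (Set.Ioi (0 : ℝ))),
              IntegrableOn (fun η => u (τ - η) * v η) (Set.Ioo (0 : ℝ) τ)) ∧
          Measurable (halfLineConv u v) ∧
          wnorm (ν1 + ν2) (halfLineConv u v) ≤ ENNReal.ofReal C * wnorm ν1 u * wnorm ν2 v := by
  have hν2' : (0 : ℝ) < ν2 := by linarith
  set c : ℝ := 1 / (2 * ν2) with hc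
  have hcpos : 0 < c := by positivity
  refine ⟨c ^ (1/2 : ℝ), Real.rpow_pos_of_pos hcpos _, ?_⟩
  intro u v hu hv hnu hnv
  set Iu := ∫⁻ t in Set.Ioi (0:ℝ), wker ν1 u t with hIu
  set Iv := ∫⁻ t in Set.Ioi (0:ℝ), wker ν2 v t with hIv
  have hIu_lt : Iu < ⊤ := by
    have h := hnu
    rw [wnorm_eq] at h
    exact (ENNReal.rpow_lt_top_iff_of_pos (by norm_num : (0:ℝ) < 1/2)).mp h
  have hIv_lt : Iv < ⊤ := by
    have h := hnv
    rw [wnorm_eq] at h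
    exact (ENNReal.rpow_lt_top_iff_of_pos (by norm_num : (0:ℝ) < 1/2)).mp h
  set X : ℝ → ℝ≥0∞ := fun τ => ∫⁻ η in Set.Ioo (0 : ℝ) τ, wker ν1 u (τ - η) * wker ν2 v η
    with hXdef
  have hXm : Measurable X := by
    have : X = fun τ => ∫⁻ η, (Set.Ioi (0:ℝ)).indicator (wker ν1 u) (τ - η) *
        (Set.Ioi (0:ℝ)).indicator (wker ν2 v) η := funext fun τ => inner_eq ν1 ν2 u v τ
    rw [this]
    exact Measurable.lintegral_prod_right' ((((measurable_wker hu).indicator measurableSet_Ioi).comp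
      (measurable_fst.sub measurable_snd)).mul
      (((measurable_wker hv).indicator measurableSet_Ioi).comp measurable_snd))
  have hXint : ∫⁻ τ in Set.Ioi (0:ℝ), X τ = Iu * Iv := fubini_aux hu hv
  have hXfin : ∀ᵐ τ ∂(volume.restrict (Set.Ioi (0:ℝ))), X τ < ⊤ := by
    refine ae_lt_top hXm ?_
    rw [hXint]
    exact (ENNReal.mul_lt_top hIu_lt hIv_lt).ne
  have hmem : ∀ᵐ τ ∂(volume.restrict (Set.Ioi (0:ℝ))), τ ∈ Set.Ioi (0:ℝ) :=
    ae_restrict_mem measurableSet_Ioi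
  -- a.e. integrability
  have hae : ∀ᵐ τ ∂(volume.restrict (Set.Ioi (0 : ℝ))),
      IntegrableOn (fun η => u (τ - η) * v η) (Set.Ioo (0 : ℝ) τ) := by
    filter_upwards [hXfin, hmem] with τ hXτ hτmem
    have hτ : (0:ℝ) < τ := hτmem
    have hCS := cs_bound (ν1 := ν1) (ν2 := ν2) hu hv hτ
    have hWlt : (∫⁻ η in Set.Ioo (0 : ℝ) τ,
        ENNReal.ofReal ((2 * (τ - η)) ^ (ν1 - 1) * (2 * η) ^ (ν2 - 1))) < ⊤ :=
      (weight_lintegral_le hν1 hν2 hτ).trans_lt ENNReal.ofReal_lt_top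
    have hlt : (∫⁻ η in Set.Ioo (0 : ℝ) τ, ENNReal.ofReal ‖u (τ - η) * v η‖) ^ (2:ℕ) < ⊤ :=
      hCS.trans_lt (ENNReal.mul_lt_top hXτ hWlt)
    have hbase : (∫⁻ η in Set.Ioo (0 : ℝ) τ, ENNReal.ofReal ‖u (τ - η) * v η‖) < ⊤ := by
      by_contra hcon
      rw [not_lt, top_le_iff] at hcon
      rw [hcon, ENNReal.top_pow (by norm_num)] at hlt
      exact lt_irrefl _ hlt
    refine ⟨((hu.comp (measurable_const.sub measurable_id)).mul hv).aestronglyMeasurable, ?_⟩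
    simp_rw [HasFiniteIntegral, ← ofReal_norm_eq_enorm]
    exact hbase
  refine ⟨hae, ?_, ?_⟩
  -- measurability of the convolution
  · have hS : MeasurableSet {p : ℝ × ℝ | 0 < p.2 ∧ p.2 < p.1} :=
      (measurableSet_lt measurable_const measurable_snd).inter
        (measurableSet_lt measurable_snd measurable_fst)
    have hF : StronglyMeasurable fun p : ℝ × ℝ =>
        Set.indicator {q : ℝ × ℝ | 0 < q.2 ∧ q.2 < q.1}
          (fun q => u (q.1 - q.2) * v q.2) p :=
      (((hu.comp (measurable_fst.sub measurable_snd)).mul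
        (hv.comp measurable_snd)).indicator hS).stronglyMeasurable
    have heq : halfLineConv u v = fun τ => ∫ η,
        Set.indicator {q : ℝ × ℝ | 0 < q.2 ∧ q.2 < q.1}
          (fun q => u (q.1 - q.2) * v q.2) (τ, η) := by
      funext τ
      rw [halfLineConv, ← integral_indicator measurableSet_Ioo]
      congr 1
    rw [heq]
    exact (MeasureTheory.StronglyMeasurable.integral_prod_right' (ν := volume) hF).measurable
  -- the norm bound
  · have pointwise : ∀ τ ∈ Set.Ioi (0:ℝ),
        wker (ν1 + ν2) (halfLineConv u v) τ ≤ X τ * ENNReal.ofReal c := by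
      intro τ hτmem
      have hτ : (0:ℝ) < τ := hτmem
      have h2τ : (0:ℝ) < 2 * τ := by linarith
      have e0 : wker (ν1 + ν2) (halfLineConv u v) τ =
          (ENNReal.ofReal ‖halfLineConv u v τ‖) ^ (2:ℕ) *
            ENNReal.ofReal ((2 * τ) ^ (1 - (ν1 + ν2))) := by
        rw [wker, ENNReal.ofReal_mul (by positivity),
          ENNReal.ofReal_pow (norm_nonneg _)]
      have habs : (ENNReal.ofReal ‖halfLineConv u v τ‖) ^ (2:ℕ) ≤
          (∫⁻ η in Set.Ioo (0 : ℝ) τ, ENNReal.ofReal ‖u (τ - η) * v η‖) ^ (2:ℕ) := by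
        refine pow_le_pow_left₀ (zero_le') ?_ 2
        rw [ofReal_norm_eq_enorm]
        refine (enorm_integral_le_lintegral_enorm _).trans ?_
        refine le_of_eq (lintegral_congr fun η => ?_)
        rw [ofReal_norm_eq_enorm]
      have hCS := cs_bound (ν1 := ν1) (ν2 := ν2) hu hv hτ
      have hW := weight_lintegral_le hν1 hν2 hτ
      calc wker (ν1 + ν2) (halfLineConv u v) τ
          = (ENNReal.ofReal ‖halfLineConv u v τ‖) ^ (2:ℕ) *
              ENNReal.ofReal ((2 * τ) ^ (1 - (ν1 + ν2))) := e0
        _ ≤ (X τ * (∫⁻ η in Set.Ioo (0 : ℝ) τ,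
              ENNReal.ofReal ((2 * (τ - η)) ^ (ν1 - 1) * (2 * η) ^ (ν2 - 1)))) *
              ENNReal.ofReal ((2 * τ) ^ (1 - (ν1 + ν2))) :=
            mul_le_mul_left (habs.trans hCS) _
        _ ≤ (X τ * ENNReal.ofReal ((2 * τ) ^ (ν1 + ν2 - 1) * c)) *
              ENNReal.ofReal ((2 * τ) ^ (1 - (ν1 + ν2))) :=
            mul_le_mul_left (mul_le_mul_right hW _) _
        _ = X τ * ENNReal.ofReal ((2 * τ) ^ (ν1 + ν2 - 1) * c * (2 * τ) ^ (1 - (ν1 + ν2))) := by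
            rw [mul_assoc, ← ENNReal.ofReal_mul (by positivity)]
        _ = X τ * ENNReal.ofReal c := by
            congr 1
            rw [show (2 * τ) ^ (ν1 + ν2 - 1) * c * (2 * τ) ^ (1 - (ν1 + ν2)) =
              ((2 * τ) ^ (ν1 + ν2 - 1) * (2 * τ) ^ (1 - (ν1 + ν2))) * c by ring,
              ← Real.rpow_add h2τ, show ν1 + ν2 - 1 + (1 - (ν1 + ν2)) = 0 by ring,
              Real.rpow_zero, one_mul]
    have hint_le : ∫⁻ τ in Set.Ioi (0:ℝ), wker (ν1 + ν2) (halfLineConv u v) τ ≤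
        Iu * Iv * ENNReal.ofReal c := by
      calc ∫⁻ τ in Set.Ioi (0:ℝ), wker (ν1 + ν2) (halfLineConv u v) τ
          ≤ ∫⁻ τ in Set.Ioi (0:ℝ), X τ * ENNReal.ofReal c :=
            setLIntegral_mono' measurableSet_Ioi pointwise
        _ = (∫⁻ τ in Set.Ioi (0:ℝ), X τ) * ENNReal.ofReal c :=
            lintegral_mul_const' _ _ ENNReal.ofReal_ne_top
        _ = Iu * Iv * ENNReal.ofReal c := by rw [hXint]
    rw [wnorm_eq, wnorm_eq, wnorm_eq]
    calc (∫⁻ τ in Set.Ioi (0:ℝ), wker (ν1 + ν2) (halfLineConv u v) τ) ^ (1/2 : ℝ)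
        ≤ (Iu * Iv * ENNReal.ofReal c) ^ (1/2 : ℝ) :=
          ENNReal.rpow_le_rpow hint_le (by norm_num)
      _ = Iu ^ (1/2 : ℝ) * Iv ^ (1/2 : ℝ) * (ENNReal.ofReal c) ^ (1/2 : ℝ) := by
          rw [ENNReal.mul_rpow_of_nonneg _ _ (by norm_num : (0:ℝ) ≤ 1/2),
            ENNReal.mul_rpow_of_nonneg _ _ (by norm_num : (0:ℝ) ≤ 1/2)]
      _ = ENNReal.ofReal (c ^ (1/2 : ℝ)) * Iu ^ (1/2 : ℝ) * Iv ^ (1/2 : ℝ) := by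
          rw [ENNReal.ofReal_rpow_of_pos hcpos]
          ring
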